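/- arXiv:2104.03683 — 4 statements merged into one kernel-verified Lean document; each statement's English description precedes it below -/
import Mathlib

section
/- Under (LD1), the truncated variance satisfies |σ̄² − σ²| ≤ 3·κ·σ²·β₂, where σ̄² = ∑_{i∈J} E[X̄_i Ȳ_i], σ² = Var(∑_{i∈J} X_i), X̄_i = X_i·1{|X_i| ≤ σ/κ}, Ȳ_i = ∑_{j∈A_i} X̄_j, and β₂ = σ^{-2}·∑_{i∈J} E[X_i²·1{|X_i| > σ/κ}]. -/
open MeasureTheory ProbabilityTheory Finset

/-!
Expanding `σ²` into covariances, (LD1) and the centring kill every term with `j ∉ A i`, so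
`σ̄² - σ² = ∑ᵢ ∑_{j ∈ A i} (E[X̄ᵢ X̄ⱼ] - E[Xᵢ Xⱼ])`. If also `i ∈ A j`, the term is bounded pointwise
by `3/2 ((Xᵢ - X̄ᵢ)² + (Xⱼ - X̄ⱼ)²)`. Otherwise `Xᵢ` and `Xⱼ` are independent, the term is
`E[X̄ᵢ] E[X̄ⱼ]`, and centring gives `|E[X̄ⱼ]| = |E[Xⱼ - X̄ⱼ]| ≤ E[(Xⱼ - X̄ⱼ)²] / t` against
`|E[X̄ᵢ]| ≤ t`, with `t = σ/κ`. The second bound must be charged to `j` alone, since `κ` bounds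
the number of `i` with `j ∈ A i` but not the size of `A i`; summing, each `j` is then charged at
most `3/2 · 2κ` times `E[(Xⱼ - X̄ⱼ)²] = E[Xⱼ² 1{|Xⱼ| > t}]`.
-/

noncomputable def truncate (t x : ℝ) : ℝ := if |x| ≤ t then x else 0

section Truncate

variable (t : ℝ)

lemma abs_truncate_le_abs (x : ℝ) : |truncate t x| ≤ |t| := by
  unfold truncate
  split_ifs with h
  · exact h.trans (le_abs_self t)
  · simp

lemma sub_truncate_sq (x : ℝ) : (x - truncate t x) ^ 2 = if t < |x| then x ^ 2 else 0 := by
  unfold truncate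
  by_cases h : |x| ≤ t
  · simp [h, not_lt.2 h]
  · simp [h, not_le.1 h]

variable {t} in
lemma abs_sub_truncate_le (ht : 0 < t) (x : ℝ) :
    |x - truncate t x| ≤ (x - truncate t x) ^ 2 / t := by
  unfold truncate
  split_ifs with h
  · simp
  · rw [sub_zero, le_div_iff₀ ht, ← sq_abs]
    nlinarith [abs_nonneg x]

lemma abs_truncate_mul_truncate_sub_mul_le (x y : ℝ) :
    |truncate t x * truncate t y - x * y| ≤
      3 / 2 * ((x - truncate t x) ^ 2 + (y - truncate t y) ^ 2) := by
  unfold truncate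
  split_ifs with hx hy hy <;>
    simp only [sub_self, mul_zero, zero_mul, zero_sub, sub_zero, abs_neg, abs_mul] <;>
    nlinarith [sq_abs x, sq_abs y, abs_nonneg x, abs_nonneg y, sq_nonneg (|x| - |y|)]

lemma measurable_truncate : Measurable (truncate t) :=
  Measurable.ite (measurableSet_le measurable_id.abs measurable_const) measurable_id
    measurable_const

end Truncate

section Probability

variable {Ω : Type*} [MeasurableSpace Ω] {μ : Measure Ω} {X Y : Ω → ℝ}

lemma memLp_truncate [IsFiniteMeasure μ] (hX : AEMeasurable X μ) (t : ℝ) (p : ENNReal) :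
    MemLp (fun ω ↦ truncate t (X ω)) p μ :=
  MemLp.of_bound ((measurable_truncate t).comp_aemeasurable hX).aestronglyMeasurable |t|
    (ae_of_all _ fun ω ↦ abs_truncate_le_abs t (X ω))

noncomputable def truncationError (t : ℝ) (X : Ω → ℝ) (μ : Measure Ω) : ℝ :=
  ∫ ω, (X ω - truncate t (X ω)) ^ 2 ∂μ

lemma truncationError_nonneg (t : ℝ) (X : Ω → ℝ) (μ : Measure Ω) : 0 ≤ truncationError t X μ :=
  integral_nonneg fun _ ↦ sq_nonneg _

variable {t : ℝ}

lemma abs_integral_truncate_mul_truncate_sub_le [IsFiniteMeasure μ] (hX : MemLp X 2 μ)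
    (hY : MemLp Y 2 μ) :
    |∫ ω, truncate t (X ω) * truncate t (Y ω) ∂μ - ∫ ω, X ω * Y ω ∂μ| ≤
      3 / 2 * (truncationError t X μ + truncationError t Y μ) := by
  have hXt := memLp_truncate hX.aemeasurable t 2
  have hYt := memLp_truncate hY.aemeasurable t 2
  have hXYt : Integrable (fun ω ↦ truncate t (X ω) * truncate t (Y ω)) μ :=
    hXt.integrable_mul hYt
  have hXY : Integrable (fun ω ↦ X ω * Y ω) μ := hX.integrable_mul hY
  have hXsq : Integrable (fun ω ↦ (X ω - truncate t (X ω)) ^ 2) μ := (hX.sub hXt).integrable_sq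
  have hYsq : Integrable (fun ω ↦ (Y ω - truncate t (Y ω)) ^ 2) μ := (hY.sub hYt).integrable_sq
  calc _ = |∫ ω, (truncate t (X ω) * truncate t (Y ω) - X ω * Y ω) ∂μ| := by
        rw [integral_sub hXYt hXY]
    _ ≤ ∫ ω, |truncate t (X ω) * truncate t (Y ω) - X ω * Y ω| ∂μ := abs_integral_le_integral_abs
    _ ≤ ∫ ω, 3 / 2 * ((X ω - truncate t (X ω)) ^ 2 + (Y ω - truncate t (Y ω)) ^ 2) ∂μ :=
        integral_mono (hXYt.sub hXY).abs ((hXsq.add hYsq).const_mul _)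
          fun ω ↦ abs_truncate_mul_truncate_sub_mul_le t (X ω) (Y ω)
    _ = _ := by rw [integral_const_mul, integral_add hXsq hYsq, truncationError, truncationError]

lemma abs_integral_truncate_le_truncationError_div [IsFiniteMeasure μ] (hY : MemLp Y 2 μ)
    (hY0 : ∫ ω, Y ω ∂μ = 0) (ht : 0 < t) :
    |∫ ω, truncate t (Y ω) ∂μ| ≤ truncationError t Y μ / t := by
  have hYt := memLp_truncate hY.aemeasurable t 2
  have hdiff := hY.sub hYt
  have hcentre : ∫ ω, truncate t (Y ω) ∂μ = -∫ ω, (Y ω - truncate t (Y ω)) ∂μ := by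
    rw [integral_sub (hY.integrable one_le_two) (hYt.integrable one_le_two), hY0, zero_sub,
      neg_neg]
  rw [hcentre, abs_neg, truncationError, ← integral_div]
  exact abs_integral_le_integral_abs.trans <| integral_mono (hdiff.integrable one_le_two).abs
    (hdiff.integrable_sq.div_const t) fun ω ↦ abs_sub_truncate_le ht (Y ω)

lemma ProbabilityTheory.IndepFun.abs_integral_truncate_mul_truncate_sub_le
    [IsProbabilityMeasure μ] (hXY : IndepFun X Y μ) (hX : AEMeasurable X μ) (hY : MemLp Y 2 μ)
    (hY0 : ∫ ω, Y ω ∂μ = 0) (ht : 0 < t) :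
    |∫ ω, truncate t (X ω) * truncate t (Y ω) ∂μ - ∫ ω, X ω * Y ω ∂μ| ≤
      truncationError t Y μ := by
  have hXYt : IndepFun (fun ω ↦ truncate t (X ω)) (fun ω ↦ truncate t (Y ω)) μ :=
    hXY.comp (measurable_truncate t) (measurable_truncate t)
  have hXt : |∫ ω, truncate t (X ω) ∂μ| ≤ t := by
    simpa [abs_of_pos ht] using norm_integral_le_of_norm_le_const (μ := μ) (C := |t|)
      (f := fun ω ↦ truncate t (X ω)) (ae_of_all _ fun ω ↦ abs_truncate_le_abs t (X ω))
  rw [hXY.integral_fun_mul_eq_mul_integral hX.aestronglyMeasurable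
      hY.aestronglyMeasurable, hY0, mul_zero, sub_zero,
    hXYt.integral_fun_mul_eq_mul_integral
      (memLp_truncate hX t 1).aestronglyMeasurable
      (memLp_truncate hY.aemeasurable t 1).aestronglyMeasurable, abs_mul]
  calc |∫ ω, truncate t (X ω) ∂μ| * |∫ ω, truncate t (Y ω) ∂μ|
      ≤ t * (truncationError t Y μ / t) :=
        mul_le_mul hXt (abs_integral_truncate_le_truncationError_div hY hY0 ht)
          (abs_nonneg _) ht.le
    _ = truncationError t Y μ := mul_div_cancel₀ _ ht.ne'

end Probability

section Counting

variable {ι : Type*} [DecidableEq ι] {J : Finset ι} {A : ι → Finset ι} {G : ι → ℝ} {κ : ℝ}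

lemma sum_sum_le_mul_sum_of_card_filter_le (hAJ : ∀ i ∈ J, A i ⊆ J)
    (hdeg : ∀ j ∈ J, (#{i ∈ J | j ∈ A i} : ℝ) ≤ κ) (hG : ∀ j ∈ J, 0 ≤ G j) :
    ∑ i ∈ J, ∑ j ∈ A i, G j ≤ κ * ∑ j ∈ J, G j := by
  rw [sum_comm' (t' := J) (s' := fun j ↦ {i ∈ J | j ∈ A i}) fun i j ↦ by
    simp only [mem_filter]
    exact ⟨fun h ↦ ⟨⟨h.1, h.2⟩, hAJ i h.1 h.2⟩, fun h ↦ h.1⟩, mul_sum]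
  refine sum_le_sum fun j hj ↦ ?_
  rw [sum_const, nsmul_eq_mul]
  exact mul_le_mul_of_nonneg_right (hdeg j hj) (hG j hj)

lemma sum_sum_ite_mem_le (hAJ : ∀ i ∈ J, A i ⊆ J) (hG : ∀ j ∈ J, 0 ≤ G j) :
    ∑ i ∈ J, ∑ j ∈ A i, (if i ∈ A j then G i else 0) ≤ ∑ i ∈ J, ∑ j ∈ A i, G j := by
  calc ∑ i ∈ J, ∑ j ∈ A i, (if i ∈ A j then G i else 0)
      = ∑ i ∈ J, ∑ j ∈ {j ∈ A i | i ∈ A j}, G i := by simp only [sum_filter]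
    _ = ∑ j ∈ J, ∑ i ∈ {i ∈ A j | j ∈ A i}, G i := sum_comm' fun i j ↦ by
        simp only [mem_filter]
        exact ⟨fun h ↦ ⟨⟨h.2.2, h.2.1⟩, hAJ i h.1 h.2.1⟩,
          fun h ↦ ⟨hAJ j h.2 h.1.1, h.1.2, h.1.1⟩⟩
    _ ≤ ∑ j ∈ J, ∑ i ∈ A j, G i := sum_le_sum fun j hj ↦
        sum_le_sum_of_subset_of_nonneg (filter_subset _ _) fun i hi _ ↦ hG i (hAJ j hj hi)

lemma sum_sum_add_ite_mem_le (hAJ : ∀ i ∈ J, A i ⊆ J)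
    (hdeg : ∀ j ∈ J, (#{i ∈ J | j ∈ A i} : ℝ) ≤ κ) (hG : ∀ j ∈ J, 0 ≤ G j) :
    ∑ i ∈ J, ∑ j ∈ A i, (G j + if i ∈ A j then G i else 0) ≤ 2 * κ * ∑ j ∈ J, G j := by
  simp only [sum_add_distrib]
  linarith [sum_sum_le_mul_sum_of_card_filter_le hAJ hdeg hG, sum_sum_ite_mem_le hAJ hG]

end Counting

section LocalDependence

variable {Ω ι : Type*} [MeasurableSpace Ω] {μ : Measure Ω} [IsProbabilityMeasure μ]
  {J : Finset ι} {A : ι → Finset ι} {X : ι → Ω → ℝ}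

lemma variance_sum_eq_sum_sum_integral_mul (hL2 : ∀ i ∈ J, MemLp (X i) 2 μ)
    (hmean : ∀ i ∈ J, ∫ ω, X i ω ∂μ = 0) (hAJ : ∀ i ∈ J, A i ⊆ J)
    (hind : ∀ i ∈ J, ∀ j ∈ J, j ∉ A i → IndepFun (X i) (X j) μ) :
    Var[fun ω ↦ ∑ i ∈ J, X i ω; μ] = ∑ i ∈ J, ∑ j ∈ A i, ∫ ω, X i ω * X j ω ∂μ := by
  rw [variance_fun_sum' hL2]
  refine sum_congr rfl fun i hi ↦ ?_
  rw [← sum_subset (hAJ i hi) fun j hj hji ↦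
    (hind i hi j hj hji).covariance_eq_zero (hL2 i hi) (hL2 j hj)]
  refine sum_congr rfl fun j hj ↦ ?_
  rw [covariance_eq_sub (hL2 i hi) (hL2 j (hAJ i hi hj)), hmean i hi, zero_mul, sub_zero]
  rfl

variable [DecidableEq ι] {t : ℝ}

lemma abs_integral_truncate_mul_truncate_sub_le_of_mem (hL2 : ∀ i ∈ J, MemLp (X i) 2 μ)
    (hmean : ∀ i ∈ J, ∫ ω, X i ω ∂μ = 0) (hAJ : ∀ i ∈ J, A i ⊆ J)
    (hind : ∀ i ∈ J, ∀ j ∈ J, j ∉ A i → IndepFun (X i) (X j) μ) (ht : 0 < t)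
    {i j : ι} (hi : i ∈ J) (hj : j ∈ A i) :
    |∫ ω, truncate t (X i ω) * truncate t (X j ω) ∂μ - ∫ ω, X i ω * X j ω ∂μ| ≤
      3 / 2 * (truncationError t (X j) μ +
        if i ∈ A j then truncationError t (X i) μ else 0) := by
  have hjJ := hAJ i hi hj
  by_cases hij : i ∈ A j
  · calc _ ≤ 3 / 2 * (truncationError t (X i) μ + truncationError t (X j) μ) :=
          abs_integral_truncate_mul_truncate_sub_le (hL2 i hi) (hL2 j hjJ)
      _ = _ := by rw [if_pos hij, add_comm]
  · calc _ ≤ truncationError t (X j) μ :=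
          (hind j hjJ i hi hij).symm.abs_integral_truncate_mul_truncate_sub_le
            (hL2 i hi).aemeasurable (hL2 j hjJ) (hmean j hjJ) ht
      _ ≤ _ := by rw [if_neg hij]; linarith [truncationError_nonneg t (X j) μ]

lemma abs_sum_sum_integral_truncate_mul_truncate_sub_le {κ : ℝ}
    (hL2 : ∀ i ∈ J, MemLp (X i) 2 μ) (hmean : ∀ i ∈ J, ∫ ω, X i ω ∂μ = 0)
    (hAJ : ∀ i ∈ J, A i ⊆ J) (hind : ∀ i ∈ J, ∀ j ∈ J, j ∉ A i → IndepFun (X i) (X j) μ)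
    (hdeg : ∀ j ∈ J, (#{i ∈ J | j ∈ A i} : ℝ) ≤ κ) (ht : 0 < t) :
    |∑ i ∈ J, ∑ j ∈ A i,
        (∫ ω, truncate t (X i ω) * truncate t (X j ω) ∂μ - ∫ ω, X i ω * X j ω ∂μ)| ≤
      3 * κ * ∑ j ∈ J, truncationError t (X j) μ := by
  calc _ ≤ ∑ i ∈ J, ∑ j ∈ A i, 3 / 2 * (truncationError t (X j) μ +
          if i ∈ A j then truncationError t (X i) μ else 0) :=
        (abs_sum_le_sum_abs _ _).trans <| sum_le_sum fun i hi ↦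
          (abs_sum_le_sum_abs _ _).trans <| sum_le_sum fun j hj ↦
            abs_integral_truncate_mul_truncate_sub_le_of_mem hL2 hmean hAJ hind ht hi hj
    _ ≤ 3 / 2 * (2 * κ * ∑ j ∈ J, truncationError t (X j) μ) := by
        simp only [← mul_sum]
        gcongr
        exact sum_sum_add_ite_mem_le hAJ hdeg fun j _ ↦ truncationError_nonneg t (X j) μ
    _ = _ := by ring

end LocalDependence

theorem truncated_variance_close_general
    {Ω : Type*} [MeasureSpace Ω] [IsProbabilityMeasure (ℙ : Measure Ω)]
    {ι : Type*} [DecidableEq ι] (J : Finset ι) (X : ι → Ω → ℝ)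
    (A B : ι → Finset ι)
    (hL2 : ∀ i ∈ J, MemLp (X i) 2 ℙ)
    (hmean : ∀ i ∈ J, (∫ ω, X i ω) = 0)
    (hAJ : ∀ i ∈ J, A i ⊆ J) (hAB : ∀ i ∈ J, A i ⊆ B i)
    -- (LD1): `X i` is independent of `{X j : j ∉ A i}`
    (hLD1 : ∀ i ∈ J, Indep (MeasurableSpace.comap (X i) inferInstance)
      (⨆ j ∈ J \ A i, MeasurableSpace.comap (X j) inferInstance) ℙ)
    (σ κ : ℝ) (hσ : 0 < σ) (hκ : 1 ≤ κ)
    (hσdef : σ ^ 2 = variance (fun ω => ∑ i ∈ J, X i ω) ℙ)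
    (hκcard : ∀ i ∈ J, ((J.filter fun j => i ∈ B j).card : ℝ) ≤ κ)
    -- truncated variables
    (Xb : ι → Ω → ℝ) (hXb : ∀ i, Xb i = fun ω => if |X i ω| ≤ σ / κ then X i ω else 0)
    (Yb : ι → Ω → ℝ) (hYb : ∀ i, Yb i = fun ω => ∑ j ∈ A i, Xb j ω)
    (σbar2 β₂ : ℝ)
    (hσbar2 : σbar2 = ∑ i ∈ J, ∫ ω, Xb i ω * Yb i ω)
    (hβ₂ : β₂ = σ⁻¹ ^ 2 * ∑ i ∈ J, ∫ ω, (if σ / κ < |X i ω| then (X i ω) ^ 2 else 0)) :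
    |σbar2 - σ ^ 2| ≤ 3 * κ * σ ^ 2 * β₂ := by
  obtain rfl : Xb = fun i ω ↦ truncate (σ / κ) (X i ω) := funext hXb
  obtain rfl : Yb = fun i ω ↦ ∑ j ∈ A i, truncate (σ / κ) (X j ω) := funext hYb
  set t := σ / κ
  have hind : ∀ i ∈ J, ∀ j ∈ J, j ∉ A i → IndepFun (X i) (X j) := fun i hi j hj hji ↦
    indep_of_indep_of_le_right (hLD1 i hi)
      (le_biSup (fun k ↦ MeasurableSpace.comap (X k) inferInstance) (mem_sdiff.2 ⟨hj, hji⟩))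
  have hdeg : ∀ j ∈ J, (#{i ∈ J | j ∈ A i} : ℝ) ≤ κ := fun j hj ↦
    le_trans (by gcongr with i hi; exact hAB i hi) (hκcard j hj)
  have hσbar2' : σbar2 = ∑ i ∈ J, ∑ j ∈ A i, ∫ ω, truncate t (X i ω) * truncate t (X j ω) :=
    hσbar2.trans <| sum_congr rfl fun i hi ↦ by
      simp_rw [mul_sum]
      exact integral_finsetSum _ fun j hj ↦
        (memLp_truncate (hL2 i hi).aemeasurable _ 2).integrable_mul
          (memLp_truncate (hL2 j (hAJ i hi hj)).aemeasurable _ 2)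
  have hβ : σ ^ 2 * β₂ = ∑ j ∈ J, truncationError t (X j) ℙ := by
    simp only [hβ₂, truncationError, sub_truncate_sq]
    field_simp
  calc |σbar2 - σ ^ 2|
      = |∑ i ∈ J, ∑ j ∈ A i, ((∫ ω, truncate t (X i ω) * truncate t (X j ω)) -
          ∫ ω, X i ω * X j ω)| := by
        rw [hσbar2', hσdef, variance_sum_eq_sum_sum_integral_mul hL2 hmean hAJ hind,
          ← sum_sub_distrib]
        simp only [← sum_sub_distrib]
    _ ≤ 3 * κ * ∑ j ∈ J, truncationError t (X j) ℙ :=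
        abs_sum_sum_integral_truncate_mul_truncate_sub_le hL2 hmean hAJ hind hdeg
          (div_pos hσ (by linarith))
    _ = 3 * κ * σ ^ 2 * β₂ := by rw [← hβ]; ring

/-- Under (LD1), the truncated variance satisfies `|σ̄² − σ²| ≤ 3·κ·σ²·β₂`. -/
theorem truncated_variance_close
    {Ω : Type*} [MeasureSpace Ω] [IsProbabilityMeasure (ℙ : Measure Ω)]
    {ι : Type*} [DecidableEq ι] (J : Finset ι) (X : ι → Ω → ℝ)
    (A B : ι → Finset ι)
    (hmeas : ∀ i, Measurable (X i))
    (hL2 : ∀ i ∈ J, MemLp (X i) 2 ℙ)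
    (hmean : ∀ i ∈ J, (∫ ω, X i ω) = 0)
    (hiA : ∀ i ∈ J, i ∈ A i) (hAJ : ∀ i ∈ J, A i ⊆ J) (hAB : ∀ i ∈ J, A i ⊆ B i)
    -- (LD1): `X i` is independent of `{X j : j ∉ A i}`
    (hLD1 : ∀ i ∈ J, Indep (MeasurableSpace.comap (X i) inferInstance)
      (⨆ j ∈ J \ A i, MeasurableSpace.comap (X j) inferInstance) ℙ)
    (σ κ : ℝ) (hσ : 0 < σ) (hκ : 1 ≤ κ)
    (hσdef : σ ^ 2 = variance (fun ω => ∑ i ∈ J, X i ω) ℙ)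
    (hκcard : ∀ i ∈ J, ((J.filter fun j => i ∈ B j).card : ℝ) ≤ κ)
    -- truncated variables
    (Xb : ι → Ω → ℝ) (hXb : ∀ i, Xb i = fun ω => if |X i ω| ≤ σ / κ then X i ω else 0)
    (Yb : ι → Ω → ℝ) (hYb : ∀ i, Yb i = fun ω => ∑ j ∈ A i, Xb j ω)
    (σbar2 β₂ : ℝ)
    (hσbar2 : σbar2 = ∑ i ∈ J, ∫ ω, Xb i ω * Yb i ω)
    (hβ₂ : β₂ = σ⁻¹ ^ 2 * ∑ i ∈ J, ∫ ω, (if σ / κ < |X i ω| then (X i ω) ^ 2 else 0)) :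
    |σbar2 - σ ^ 2| ≤ 3 * κ * σ ^ 2 * β₂ :=
  truncated_variance_close_general J X A B hL2 hmean hAJ hAB hLD1 σ κ hσ hκ hσdef hκcard Xb hXb Yb
    hYb σbar2 β₂ hσbar2 hβ₂
end

section
/- Under (LD1) and (LD2), P(|∑_{i∈J}(X̄_i Ȳ_i − E[X̄_i Ȳ_i])| ≥ σ²/2) ≤ 4·κ²·β₃. -/
/-!
By Chebyshev's inequality it suffices to show `Var (∑ ξᵢ) ≤ κ²σ⁴β₃` for `ξᵢ = X̄ᵢȲᵢ`.
Each `ξᵢ` is a function of `{Xⱼ : j ∈ Aᵢ}`, so by (LD2) `ξᵢ` and `ξⱼ` are uncorrelated unless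
`Bᵢ` meets `Aⱼ`; bounding the remaining covariances by `(Var ξᵢ + Var ξⱼ)/2` gives
`Var (∑ ξᵢ) ≤ κ ∑ E ξᵢ²`. Since `|X̄| ≤ σ/κ`, Cauchy–Schwarz and AM–GM give
`ξᵢ² ≤ (σ/κ)/3 · (|Aᵢ|²|X̄ᵢ|³ + 2|Aᵢ| ∑_{k ∈ Aᵢ} |X̄ₖ|³)`, and summing with the multiplicity
bounds yields `∑ E ξᵢ² ≤ σκ ∑ E|X̄ᵢ|³ = κσ⁴β₃`.
-/

open MeasureTheory ProbabilityTheory Finset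

section FinsetSum

variable {ι : Type*} {s : Finset ι} {f : ι → ℝ} {κ : ℝ}

lemma sum_sum_ite_le_mul_sum (N : ι → ι → Prop) [DecidableRel N] (hf : ∀ i ∈ s, 0 ≤ f i)
    (hcard : ∀ i ∈ s, (#{j ∈ s | N i j} : ℝ) ≤ κ) :
    ∑ i ∈ s, ∑ j ∈ s, (if N i j then f i else 0) ≤ κ * ∑ i ∈ s, f i := by
  rw [mul_sum]
  refine sum_le_sum fun i hi => ?_
  rw [← sum_filter, sum_const, nsmul_eq_mul]
  exact mul_le_mul_of_nonneg_right (hcard i hi) (hf i hi)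

lemma sum_sum_le_mul_sum [DecidableEq ι] {A : ι → Finset ι} (hA : ∀ i ∈ s, A i ⊆ s)
    (hf : ∀ i ∈ s, 0 ≤ f i) (hcard : ∀ k ∈ s, (#{i ∈ s | k ∈ A i} : ℝ) ≤ κ) :
    ∑ i ∈ s, ∑ k ∈ A i, f k ≤ κ * ∑ k ∈ s, f k := by
  have hsum : ∀ i ∈ s, ∑ k ∈ A i, f k = ∑ k ∈ s, if k ∈ A i then f k else 0 := fun i hi => by
    rw [sum_ite_mem, inter_eq_right.2 (hA i hi)]
  rw [sum_congr rfl hsum, sum_comm]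
  exact sum_sum_ite_le_mul_sum (fun k i => k ∈ A i) hf hcard

lemma sq_mul_sum_le (x : ι → ℝ) {a m : ℝ} (ha : |a| ≤ m) :
    (a * ∑ k ∈ s, x k) ^ 2 ≤ m / 3 * (#s ^ 2 * |a| ^ 3 + 2 * #s * ∑ k ∈ s, |x k| ^ 3) := by
  -- AM–GM: `|a| x² ≤ (|a|³ + |x|³ + |x|³) / 3`
  have amgm : ∀ k, a ^ 2 * x k ^ 2 ≤ m / 3 * (|a| ^ 3 + 2 * |x k| ^ 3) := fun k => by
    have hu := abs_nonneg a
    have hv := abs_nonneg (x k)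
    rw [← sq_abs a, ← sq_abs (x k)]
    nlinarith [mul_le_mul_of_nonneg_right ha (mul_nonneg hu (sq_nonneg |x k|)),
      mul_nonneg (add_nonneg (add_nonneg hu hv) hv) (sq_nonneg (|a| - |x k|))]
  calc (a * ∑ k ∈ s, x k) ^ 2 ≤ a ^ 2 * (#s * ∑ k ∈ s, x k ^ 2) := by
        rw [mul_pow]; exact mul_le_mul_of_nonneg_left (sq_sum_le_card_mul_sum_sq ..) (sq_nonneg a)
    _ = #s * ∑ k ∈ s, a ^ 2 * x k ^ 2 := by rw [mul_sum, mul_sum, mul_sum]; ring_nf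
    _ ≤ #s * ∑ k ∈ s, m / 3 * (|a| ^ 3 + 2 * |x k| ^ 3) :=
        mul_le_mul_of_nonneg_left (sum_le_sum fun k _ => amgm k) (Nat.cast_nonneg _)
    _ = m / 3 * (#s ^ 2 * |a| ^ 3 + 2 * #s * ∑ k ∈ s, |x k| ^ 3) := by
        rw [← mul_sum, sum_add_distrib, sum_const, nsmul_eq_mul, ← mul_sum]; ring

end FinsetSum

/-- Unlike `ProbabilityTheory.truncation`, which cuts at `(-c, c]`, this keeps `x` on `[-c, c]`,
as `X̄ᵢ = Xᵢ·1{|Xᵢ| ≤ σ/κ}` does. -/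
noncomputable def truncateAbs (c x : ℝ) : ℝ := if |x| ≤ c then x else 0

lemma measurable_truncateAbs (c : ℝ) : Measurable (truncateAbs c) :=
  Measurable.ite (measurableSet_le measurable_abs measurable_const) measurable_id measurable_const

lemma abs_truncateAbs_le {c : ℝ} (hc : 0 ≤ c) (x : ℝ) : |truncateAbs c x| ≤ c := by
  unfold truncateAbs
  split_ifs
  exacts [‹_›, by simpa using hc]

lemma abs_truncateAbs_pow (c x : ℝ) {n : ℕ} (hn : n ≠ 0) :
    |truncateAbs c x| ^ n = if |x| ≤ c then |x| ^ n else 0 := by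
  unfold truncateAbs
  split_ifs <;> simp [hn]

section Probability

variable {Ω ι : Type*} {mΩ : MeasurableSpace Ω} {μ : Measure Ω}

lemma two_mul_covariance_le_variance_add_variance [IsFiniteMeasure μ] {X Y : Ω → ℝ}
    (hX : MemLp X 2 μ) (hY : MemLp Y 2 μ) : 2 * cov[X, Y; μ] ≤ Var[X; μ] + Var[Y; μ] := by
  have := variance_sub hX hY ▸ variance_nonneg (X - Y) μ
  linarith

lemma covariance_eq_zero_of_indep {m₁ m₂ : MeasurableSpace Ω} (h : Indep m₁ m₂ μ)
    {X Y : Ω → ℝ} (hX₁ : Measurable[m₁] X) (hY₂ : Measurable[m₂] Y)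
    (hX : MemLp X 2 μ) (hY : MemLp Y 2 μ) : cov[X, Y; μ] = 0 := by
  refine IndepFun.covariance_eq_zero ?_ hX hY
  rw [IndepFun_iff_Indep]
  exact indep_of_indep_of_le_right (indep_of_indep_of_le_left h hX₁.comap_le) hY₂.comap_le

lemma variance_sum_le_mul_sum_variance [IsFiniteMeasure μ] {s : Finset ι} {ξ : ι → Ω → ℝ}
    (hξ : ∀ i ∈ s, MemLp (ξ i) 2 μ) (N : ι → ι → Prop) [DecidableRel N] {κ : ℝ}
    (hcov : ∀ i ∈ s, ∀ j ∈ s, ¬ N i j → cov[ξ i, ξ j; μ] = 0)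
    (hcard : ∀ i ∈ s, (#{j ∈ s | N i j} : ℝ) ≤ κ) :
    Var[∑ i ∈ s, ξ i; μ] ≤ κ * ∑ i ∈ s, Var[ξ i; μ] := by
  set V := fun i => Var[ξ i; μ]
  have hV : ∀ i ∈ s, 0 ≤ V i := fun i _ => variance_nonneg _ _
  have pair : ∀ i ∈ s, ∀ j ∈ s,
      2 * cov[ξ i, ξ j; μ] ≤ (if N i j then V i else 0) + if N j i then V j else 0 := by
    intro i hi j hj
    by_cases hij : N i j
    · by_cases hji : N j i
      · simpa [hij, hji] using two_mul_covariance_le_variance_add_variance (hξ i hi) (hξ j hj)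
      · rw [covariance_comm, hcov j hj i hi hji]
        simp [hij, hji, hV i hi]
    · rw [hcov i hi j hj hij]
      split_ifs <;> simp [hV j hj]
  have hsum : 2 * ∑ i ∈ s, ∑ j ∈ s, cov[ξ i, ξ j; μ]
      ≤ 2 * ∑ i ∈ s, ∑ j ∈ s, if N i j then V i else 0 := by
    calc 2 * ∑ i ∈ s, ∑ j ∈ s, cov[ξ i, ξ j; μ]
        ≤ ∑ i ∈ s, ∑ j ∈ s, ((if N i j then V i else 0) + if N j i then V j else 0) := by
          rw [mul_sum]
          exact sum_le_sum fun i hi => (mul_sum ..).trans_le (sum_le_sum (pair i hi))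
      _ = 2 * ∑ i ∈ s, ∑ j ∈ s, if N i j then V i else 0 := by
          simp only [sum_add_distrib]
          rw [sum_comm (f := fun i j => if N j i then V j else 0)]
          ring
  rw [variance_sum' hξ]
  linarith [sum_sum_ite_le_mul_sum N hV hcard]

lemma measurable_biSup_comap_of_mem {β : Type*} [MeasurableSpace β] {X : ι → Ω → β}
    {S : Finset ι} {k : ι} (hk : k ∈ S) {f : Ω → ℝ} (hf : Measurable[MeasurableSpace.comap (X k) inferInstance] f) :
    Measurable[⨆ j ∈ S, MeasurableSpace.comap (X j) inferInstance] f :=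
  hf.mono (le_iSup₂ (f := fun j (_ : j ∈ S) => MeasurableSpace.comap (X j) inferInstance) k hk)
    le_rfl

section BoundedFamily

variable [IsFiniteMeasure μ] {Y : ι → Ω → ℝ} {m : ℝ}

lemma memLp_mul_sum_of_bound (hY : ∀ k, Measurable (Y k)) (hm : ∀ k ω, |Y k ω| ≤ m)
    (p : ENNReal) (i : ι) (s : Finset ι) : MemLp (fun ω => Y i ω * ∑ k ∈ s, Y k ω) p μ := by
  have hYtop : ∀ k, MemLp (Y k) ⊤ μ := fun k =>
    memLp_top_of_bound (hY k).aestronglyMeasurable m (ae_of_all _ (hm k))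
  exact ((memLp_finsetSum s fun k _ => hYtop k).mul' (hYtop i)).mono_exponent le_top

lemma integral_sq_mul_sum_le (hY : ∀ k, Measurable (Y k)) (hm : ∀ k ω, |Y k ω| ≤ m)
    (i : ι) (s : Finset ι) :
    ∫ ω, (Y i ω * ∑ k ∈ s, Y k ω) ^ 2 ∂μ
      ≤ m / 3 * (#s ^ 2 * ∫ ω, |Y i ω| ^ 3 ∂μ + 2 * #s * ∑ k ∈ s, ∫ ω, |Y k ω| ^ 3 ∂μ) := by
  have hcube : ∀ k, Integrable (fun ω => |Y k ω| ^ 3) μ := fun k =>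
    Integrable.of_bound ((hY k).abs.pow_const 3).aestronglyMeasurable (m ^ 3)
      (ae_of_all _ fun ω => by
        rw [Real.norm_eq_abs, abs_pow, abs_abs]
        exact pow_le_pow_left₀ (abs_nonneg _) (hm k ω) 3)
  calc ∫ ω, (Y i ω * ∑ k ∈ s, Y k ω) ^ 2 ∂μ
      ≤ ∫ ω, m / 3 * (#s ^ 2 * |Y i ω| ^ 3 + 2 * #s * ∑ k ∈ s, |Y k ω| ^ 3) ∂μ :=
        integral_mono_of_nonneg (ae_of_all _ fun ω => sq_nonneg _)
          ((((hcube i).const_mul _).add ((integrable_finsetSum s fun k _ => hcube k).const_mul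
            _)).const_mul _)
          (ae_of_all _ fun ω => sq_mul_sum_le _ (hm i ω))
    _ = _ := by
        rw [integral_const_mul, integral_add ((hcube i).const_mul _)
          ((integrable_finsetSum s fun k _ => hcube k).const_mul _), integral_const_mul,
          integral_const_mul, integral_finsetSum s fun k _ => hcube k]

end BoundedFamily

lemma measureReal_le_abs_sum_sub_integral_le [IsFiniteMeasure μ] {s : Finset ι}
    {ξ : ι → Ω → ℝ} (hξ : ∀ i ∈ s, MemLp (ξ i) 2 μ) {c : ℝ} (hc : 0 < c) :
    μ.real {ω | c ≤ |∑ i ∈ s, (ξ i ω - ∫ ω', ξ i ω' ∂μ)|} ≤ Var[∑ i ∈ s, ξ i; μ] / c ^ 2 := by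
  have hcheb := meas_ge_le_variance_div_sq (memLp_finsetSum' s hξ) hc
  simp only [Finset.sum_apply, integral_finsetSum s fun i hi => (hξ i hi).integrable one_le_two,
    ← sum_sub_distrib] at hcheb
  exact ENNReal.toReal_le_of_le_ofReal (div_nonneg (variance_nonneg _ _) (sq_nonneg c)) hcheb

section LocalDependence

variable [DecidableEq ι] {J : Finset ι} {A B : ι → Finset ι} {Y : ι → Ω → ℝ} {m κ : ℝ}

lemma sum_integral_sq_mul_sum_le [IsFiniteMeasure μ] (hY : ∀ k, Measurable (Y k))
    (hm : ∀ k ω, |Y k ω| ≤ m) (hm₀ : 0 ≤ m) (hκ₀ : 0 ≤ κ) (hAJ : ∀ i ∈ J, A i ⊆ J)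
    (hA : ∀ i ∈ J, (#(A i) : ℝ) ≤ κ) (hcard : ∀ k ∈ J, (#{i ∈ J | k ∈ A i} : ℝ) ≤ κ) :
    ∑ i ∈ J, ∫ ω, (Y i ω * ∑ k ∈ A i, Y k ω) ^ 2 ∂μ
      ≤ m * κ ^ 2 * ∑ i ∈ J, ∫ ω, |Y i ω| ^ 3 ∂μ := by
  set M := fun i => ∫ ω, |Y i ω| ^ 3 ∂μ
  have hM : ∀ i ∈ J, 0 ≤ M i := fun i _ => integral_nonneg fun ω => by positivity
  calc ∑ i ∈ J, ∫ ω, (Y i ω * ∑ k ∈ A i, Y k ω) ^ 2 ∂μ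
      ≤ ∑ i ∈ J, m / 3 * (#(A i) ^ 2 * M i + 2 * #(A i) * ∑ k ∈ A i, M k) :=
        sum_le_sum fun i _ => integral_sq_mul_sum_le hY hm i (A i)
    _ ≤ ∑ i ∈ J, m / 3 * (κ ^ 2 * M i + 2 * κ * ∑ k ∈ A i, M k) := by
        gcongr with i hi <;> exact hA i hi
    _ = m / 3 * (κ ^ 2 * ∑ i ∈ J, M i + 2 * κ * ∑ i ∈ J, ∑ k ∈ A i, M k) := by
        simp only [mul_add, mul_sum, sum_add_distrib]
    _ ≤ m / 3 * (κ ^ 2 * ∑ i ∈ J, M i + 2 * κ * (κ * ∑ i ∈ J, M i)) := by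
        gcongr
        exact sum_sum_le_mul_sum hAJ hM hcard
    _ = m * κ ^ 2 * ∑ i ∈ J, M i := by ring

lemma variance_sum_mul_sum_le_mul_sum_variance [IsFiniteMeasure μ] {β : Type*} [MeasurableSpace β]
    {X : ι → Ω → β} (hX : ∀ i, Measurable (X i))
    (hY : ∀ i, Measurable[MeasurableSpace.comap (X i) inferInstance] (Y i))
    (hm : ∀ k ω, |Y k ω| ≤ m) (hiA : ∀ i ∈ J, i ∈ A i) (hAJ : ∀ i ∈ J, A i ⊆ J)
    (hLD2 : ∀ i ∈ J, Indep (⨆ j ∈ A i, MeasurableSpace.comap (X j) inferInstance)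
      (⨆ j ∈ J \ B i, MeasurableSpace.comap (X j) inferInstance) μ)
    (hcard : ∀ i ∈ J, (#{j ∈ J | (B i ∩ A j).Nonempty} : ℝ) ≤ κ) :
    Var[∑ i ∈ J, fun ω => Y i ω * ∑ k ∈ A i, Y k ω; μ]
      ≤ κ * ∑ i ∈ J, Var[fun ω => Y i ω * ∑ k ∈ A i, Y k ω; μ] := by
  have hYmeas : ∀ i, Measurable (Y i) := fun i => (hY i).mono (hX i).comap_le le_rfl
  have hξ : ∀ S : Finset ι, ∀ i ∈ J, A i ⊆ S →
      Measurable[⨆ j ∈ S, MeasurableSpace.comap (X j) inferInstance]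
        (fun ω => Y i ω * ∑ k ∈ A i, Y k ω) := fun S i hi hS =>
    (measurable_biSup_comap_of_mem (hS (hiA i hi)) (hY i)).mul
      (Finset.measurable_sum _ fun k hk => measurable_biSup_comap_of_mem (hS hk) (hY k))
  refine variance_sum_le_mul_sum_variance (fun i _ => memLp_mul_sum_of_bound hYmeas hm 2 i (A i))
    (fun i j => (B i ∩ A j).Nonempty) (fun i hi j hj hij => ?_) hcard
  refine covariance_eq_zero_of_indep (hLD2 i hi) (hξ _ i hi subset_rfl) (hξ _ j hj fun k hk => ?_)
    (memLp_mul_sum_of_bound hYmeas hm 2 i (A i)) (memLp_mul_sum_of_bound hYmeas hm 2 j (A j))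
  exact mem_sdiff.2 ⟨hAJ j hj hk, fun hkB => hij ⟨k, mem_inter.2 ⟨hkB, hk⟩⟩⟩

lemma variance_sum_mul_sum_le [IsProbabilityMeasure μ] {β : Type*} [MeasurableSpace β]
    {X : ι → Ω → β} (hX : ∀ i, Measurable (X i))
    (hY : ∀ i, Measurable[MeasurableSpace.comap (X i) inferInstance] (Y i))
    (hm : ∀ k ω, |Y k ω| ≤ m) (hm₀ : 0 ≤ m) (hκ₀ : 0 ≤ κ)
    (hiA : ∀ i ∈ J, i ∈ A i) (hAJ : ∀ i ∈ J, A i ⊆ J) (hAB : ∀ i ∈ J, A i ⊆ B i)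
    (hLD2 : ∀ i ∈ J, Indep (⨆ j ∈ A i, MeasurableSpace.comap (X j) inferInstance)
      (⨆ j ∈ J \ B i, MeasurableSpace.comap (X j) inferInstance) μ)
    (hκB : ∀ i ∈ J, (#{j ∈ J | i ∈ B j} : ℝ) ≤ κ)
    (hκBA : ∀ i ∈ J, (#{j ∈ J | (B i ∩ A j).Nonempty} : ℝ) ≤ κ) :
    Var[∑ i ∈ J, fun ω => Y i ω * ∑ k ∈ A i, Y k ω; μ]
      ≤ m * κ ^ 3 * ∑ i ∈ J, ∫ ω, |Y i ω| ^ 3 ∂μ := by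
  have hYmeas : ∀ i, Measurable (Y i) := fun i => (hY i).mono (hX i).comap_le le_rfl
  have hA : ∀ i ∈ J, (#(A i) : ℝ) ≤ κ := fun i hi =>
    le_trans (Nat.cast_le.2 (card_le_card fun j hj => mem_filter.2
      ⟨hAJ i hi hj, j, mem_inter.2 ⟨hAB i hi hj, hiA j (hAJ i hi hj)⟩⟩)) (hκBA i hi)
  have hA' : ∀ k ∈ J, (#{i ∈ J | k ∈ A i} : ℝ) ≤ κ := fun k hk =>
    le_trans (Nat.cast_le.2 (card_le_card fun i hi => by
      rw [mem_filter] at hi ⊢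
      exact ⟨hi.1, hAB i hi.1 hi.2⟩)) (hκB k hk)
  calc Var[∑ i ∈ J, fun ω => Y i ω * ∑ k ∈ A i, Y k ω; μ]
      ≤ κ * ∑ i ∈ J, Var[fun ω => Y i ω * ∑ k ∈ A i, Y k ω; μ] :=
        variance_sum_mul_sum_le_mul_sum_variance hX hY hm hiA hAJ hLD2 hκBA
    _ ≤ κ * ∑ i ∈ J, ∫ ω, (Y i ω * ∑ k ∈ A i, Y k ω) ^ 2 ∂μ := by
        gcongr with i
        exact variance_le_expectation_sq (memLp_mul_sum_of_bound hYmeas hm 2 i (A i)).1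
    _ ≤ κ * (m * κ ^ 2 * ∑ i ∈ J, ∫ ω, |Y i ω| ^ 3 ∂μ) := by
        gcongr
        exact sum_integral_sq_mul_sum_le hYmeas hm hm₀ hκ₀ hAJ hA hA'
    _ = m * κ ^ 3 * ∑ i ∈ J, ∫ ω, |Y i ω| ^ 3 ∂μ := by ring

end LocalDependence

end Probability

theorem truncated_quadratic_form_concentration_general
    {Ω : Type*} [MeasureSpace Ω] [IsProbabilityMeasure (ℙ : Measure Ω)]
    {ι : Type*} [DecidableEq ι] (J : Finset ι) (X : ι → Ω → ℝ)
    (A B : ι → Finset ι)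
    (hmeas : ∀ i, Measurable (X i))
    (hiA : ∀ i ∈ J, i ∈ A i) (hAJ : ∀ i ∈ J, A i ⊆ J) (hAB : ∀ i ∈ J, A i ⊆ B i)
    -- (LD2): `{X j : j ∈ A i}` is independent of `{X j : j ∉ B i}`
    (hLD2 : ∀ i ∈ J, Indep (⨆ j ∈ A i, MeasurableSpace.comap (X j) inferInstance)
      (⨆ j ∈ J \ B i, MeasurableSpace.comap (X j) inferInstance) ℙ)
    (σ κ : ℝ) (hσ : 0 < σ) (hκ : 1 ≤ κ)
    (hκcard : ∀ i ∈ J, ((J.filter fun j => i ∈ B j).card : ℝ) ≤ κ)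
    (hκcard' : ∀ i ∈ J, ((J.filter fun j => (B i ∩ A j).Nonempty).card : ℝ) ≤ κ)
    -- truncated variables
    (Xb : ι → Ω → ℝ) (hXb : ∀ i, Xb i = fun ω => if |X i ω| ≤ σ / κ then X i ω else 0)
    (Yb : ι → Ω → ℝ) (hYb : ∀ i, Yb i = fun ω => ∑ j ∈ A i, Xb j ω)
    (β₃ : ℝ)
    (hβ₃ : β₃ = σ⁻¹ ^ 3 * ∑ i ∈ J, ∫ ω, (if |X i ω| ≤ σ / κ then |X i ω| ^ 3 else 0)) :
    (ℙ {ω | σ ^ 2 / 2 ≤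
        |∑ i ∈ J, (Xb i ω * Yb i ω - ∫ ω', Xb i ω' * Yb i ω')|}).toReal ≤
      4 * κ ^ 2 * β₃ := by
  have hκ₀ : 0 < κ := one_pos.trans_le hκ
  have hm₀ : 0 ≤ σ / κ := by positivity
  have hXb' : ∀ i ω, Xb i ω = truncateAbs (σ / κ) (X i ω) := fun i ω => congrFun (hXb i) ω
  have hXb_comap : ∀ i, Measurable[MeasurableSpace.comap (X i) inferInstance] (Xb i) := fun i =>
    hXb i ▸ (measurable_truncateAbs _).comp (comap_measurable (X i))
  have hXb_meas : ∀ i, Measurable (Xb i) := fun i => (hXb_comap i).mono (hmeas i).comap_le le_rfl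
  have hXb_le : ∀ i ω, |Xb i ω| ≤ σ / κ := fun i ω => hXb' i ω ▸ abs_truncateAbs_le hm₀ (X i ω)
  have hβ : β₃ = σ⁻¹ ^ 3 * ∑ i ∈ J, ∫ ω, |Xb i ω| ^ 3 := by
    simp only [hβ₃, hXb', abs_truncateAbs_pow _ _ three_ne_zero]
  simp only [hYb]
  calc _ ≤ Var[∑ i ∈ J, fun ω => Xb i ω * ∑ j ∈ A i, Xb j ω; ℙ] / (σ ^ 2 / 2) ^ 2 :=
        measureReal_le_abs_sum_sub_integral_le
          (fun i _ => memLp_mul_sum_of_bound hXb_meas hXb_le 2 i (A i)) (by positivity)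
    _ ≤ σ / κ * κ ^ 3 * (∑ i ∈ J, ∫ ω, |Xb i ω| ^ 3) / (σ ^ 2 / 2) ^ 2 := by
        gcongr
        exact variance_sum_mul_sum_le hmeas hXb_comap hXb_le hm₀ hκ₀.le hiA hAJ hAB hLD2
          hκcard hκcard'
    _ = 4 * κ ^ 2 * β₃ := by
        rw [hβ]
        field_simp
        ring

/-- Under (LD1) and (LD2):
`P(|∑ᵢ(X̄ᵢȲᵢ − E[X̄ᵢȲᵢ])| ≥ σ²/2) ≤ 4·κ²·β₃`. -/
theorem truncated_quadratic_form_concentration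
    {Ω : Type*} [MeasureSpace Ω] [IsProbabilityMeasure (ℙ : Measure Ω)]
    {ι : Type*} [DecidableEq ι] (J : Finset ι) (X : ι → Ω → ℝ)
    (A B : ι → Finset ι)
    (hmeas : ∀ i, Measurable (X i))
    (hL2 : ∀ i ∈ J, MemLp (X i) 2 ℙ)
    (hmean : ∀ i ∈ J, (∫ ω, X i ω) = 0)
    (hiA : ∀ i ∈ J, i ∈ A i) (hAJ : ∀ i ∈ J, A i ⊆ J) (hAB : ∀ i ∈ J, A i ⊆ B i)
    -- (LD1): `X i` is independent of `{X j : j ∉ A i}`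
    (hLD1 : ∀ i ∈ J, Indep (MeasurableSpace.comap (X i) inferInstance)
      (⨆ j ∈ J \ A i, MeasurableSpace.comap (X j) inferInstance) ℙ)
    (hBJ : ∀ i ∈ J, B i ⊆ J)
    -- (LD2): `{X j : j ∈ A i}` is independent of `{X j : j ∉ B i}`
    (hLD2 : ∀ i ∈ J, Indep (⨆ j ∈ A i, MeasurableSpace.comap (X j) inferInstance)
      (⨆ j ∈ J \ B i, MeasurableSpace.comap (X j) inferInstance) ℙ)
    (σ κ : ℝ) (hσ : 0 < σ) (hκ : 1 ≤ κ)
    (hσdef : σ ^ 2 = variance (fun ω => ∑ i ∈ J, X i ω) ℙ)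
    (hκcard : ∀ i ∈ J, ((J.filter fun j => i ∈ B j).card : ℝ) ≤ κ)
    (hκcard' : ∀ i ∈ J, ((J.filter fun j => (B i ∩ A j).Nonempty).card : ℝ) ≤ κ)
    -- truncated variables
    (Xb : ι → Ω → ℝ) (hXb : ∀ i, Xb i = fun ω => if |X i ω| ≤ σ / κ then X i ω else 0)
    (Yb : ι → Ω → ℝ) (hYb : ∀ i, Yb i = fun ω => ∑ j ∈ A i, Xb j ω)
    (β₃ : ℝ)
    (hβ₃ : β₃ = σ⁻¹ ^ 3 * ∑ i ∈ J, ∫ ω, (if |X i ω| ≤ σ / κ then |X i ω| ^ 3 else 0)) :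
    (ℙ {ω | σ ^ 2 / 2 ≤
        |∑ i ∈ J, (Xb i ω * Yb i ω - ∫ ω', Xb i ω' * Yb i ω')|}).toReal ≤
      4 * κ ^ 2 * β₃ :=
  truncated_quadratic_form_concentration_general J X A B hmeas hiA hAJ hAB hLD2 σ κ hσ hκ hκcard
    hκcard' Xb hXb Yb hYb β₃ hβ₃
end

section
/- Under (LD1), the sum of truncated second-moment cross terms satisfies ∑_{i∈J} E[X̄_i² Ȳ_i²] ≤ κ·σ⁴·β₃, where X̄_i = X_i·1{|X_i| ≤ σ/κ}, Ȳ_i = ∑_{j∈A_i} X̄_j, β₃ = σ^{-3}·∑_{i∈J} E[|X_i|³·1{|X_i| ≤ σ/κ}]. -/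
/-!
Truncation makes every `|X̄ⱼ| ≤ σ/κ`, so `|Aᵢ| ≤ κ` gives `|Ȳᵢ| ≤ σ`. Hence pointwise
`X̄ᵢ² Ȳᵢ² ≤ σ X̄ᵢ² ∑_{j ∈ Aᵢ} |X̄ⱼ| ≤ σ ∑_{j ∈ Aᵢ} (⅔ |X̄ᵢ|³ + ⅓ |X̄ⱼ|³)` by Young's inequality.
After taking expectations and summing over `i`, each `E|X̄ⱼ|³` occurs at most `κ` times in the
first term (`|Aⱼ| ≤ κ`) and at most `κ` times in the second (`j` lies in at most `κ` of the `Aᵢ`),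
which gives `σ κ ∑ⱼ E|X̄ⱼ|³ = κ σ⁴ β₃`.
-/

open MeasureTheory ProbabilityTheory Finset

lemma sq_mul_le_two_thirds_cube_add_third_cube {a b : ℝ} (ha : 0 ≤ a) (hb : 0 ≤ b) :
    a ^ 2 * b ≤ 2 / 3 * a ^ 3 + 1 / 3 * b ^ 3 := by
  nlinarith [mul_nonneg (sq_nonneg (a - b)) ha, mul_nonneg (sq_nonneg (a - b)) hb]

lemma abs_ite_abs_le_le {x c : ℝ} (hc : 0 ≤ c) : |if |x| ≤ c then x else 0| ≤ c := by
  split_ifs with h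
  · exact h
  · simpa using hc

lemma abs_ite_abs_le_pow (x c : ℝ) {n : ℕ} (hn : n ≠ 0) :
    |if |x| ≤ c then x else 0| ^ n = if |x| ≤ c then |x| ^ n else 0 := by
  split_ifs <;> simp [hn]

section DoubleCounting

variable {ι : Type*} (J : Finset ι) (A : ι → Finset ι) {κ : ℝ} {G : ι → ℝ}

lemma sum_sum_const_le_of_card_le (hG : ∀ i ∈ J, 0 ≤ G i) (hκA : ∀ i ∈ J, ((A i).card : ℝ) ≤ κ) :
    ∑ i ∈ J, ∑ _j ∈ A i, G i ≤ κ * ∑ i ∈ J, G i := by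
  rw [mul_sum]
  refine sum_le_sum fun i hi => ?_
  rw [sum_const, nsmul_eq_mul]
  exact mul_le_mul_of_nonneg_right (hκA i hi) (hG i hi)

lemma sum_sum_le_of_card_filter_mem_le [DecidableEq ι] (hG : ∀ i ∈ J, 0 ≤ G i)
    (hAJ : ∀ i ∈ J, A i ⊆ J) (hκA' : ∀ i ∈ J, ((J.filter fun j => i ∈ A j).card : ℝ) ≤ κ) :
    ∑ i ∈ J, ∑ j ∈ A i, G j ≤ κ * ∑ j ∈ J, G j := by
  have hswap : ∑ i ∈ J, ∑ j ∈ A i, G j = ∑ j ∈ J, ∑ _i ∈ J.filter fun i => j ∈ A i, G j :=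
    sum_comm' fun i j => by
      simp only [mem_filter]
      exact ⟨fun ⟨hi, hj⟩ => ⟨⟨hi, hj⟩, hAJ i hi hj⟩, fun ⟨⟨hi, hj⟩, _⟩ => ⟨hi, hj⟩⟩
  rw [hswap]
  exact sum_sum_const_le_of_card_le J _ hG hκA'

lemma sum_sum_two_thirds_add_third_le [DecidableEq ι] (hG : ∀ i ∈ J, 0 ≤ G i)
    (hAJ : ∀ i ∈ J, A i ⊆ J) (hκA : ∀ i ∈ J, ((A i).card : ℝ) ≤ κ)
    (hκA' : ∀ i ∈ J, ((J.filter fun j => i ∈ A j).card : ℝ) ≤ κ) :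
    ∑ i ∈ J, ∑ j ∈ A i, (2 / 3 * G i + 1 / 3 * G j) ≤ κ * ∑ i ∈ J, G i := by
  have hout := sum_sum_const_le_of_card_le J A hG hκA
  have hin := sum_sum_le_of_card_filter_mem_le J A hG hAJ hκA'
  simp only [sum_add_distrib, ← mul_sum]
  linarith

end DoubleCounting

lemma sq_mul_sq_sum_le {ι : Type*} (s : Finset ι) (x : ι → ℝ) (i : ι) {σ : ℝ}
    (hσ : |∑ j ∈ s, x j| ≤ σ) :
    x i ^ 2 * (∑ j ∈ s, x j) ^ 2 ≤ σ * ∑ j ∈ s, (2 / 3 * |x i| ^ 3 + 1 / 3 * |x j| ^ 3) := by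
  have hσ0 : 0 ≤ σ := (abs_nonneg _).trans hσ
  have hsq : (∑ j ∈ s, x j) ^ 2 ≤ σ * ∑ j ∈ s, |x j| := by
    rw [← sq_abs, sq]
    exact mul_le_mul hσ (abs_sum_le_sum_abs _ _) (abs_nonneg _) hσ0
  calc x i ^ 2 * (∑ j ∈ s, x j) ^ 2 ≤ x i ^ 2 * (σ * ∑ j ∈ s, |x j|) :=
        mul_le_mul_of_nonneg_left hsq (sq_nonneg _)
    _ = σ * ∑ j ∈ s, |x i| ^ 2 * |x j| := by
        rw [sq_abs, mul_sum, mul_sum, mul_sum]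
        exact sum_congr rfl fun j _ => by ring
    _ ≤ σ * ∑ j ∈ s, (2 / 3 * |x i| ^ 3 + 1 / 3 * |x j| ^ 3) :=
        mul_le_mul_of_nonneg_left (sum_le_sum fun j _ =>
          sq_mul_le_two_thirds_cube_add_third_cube (abs_nonneg _) (abs_nonneg _)) hσ0

lemma integral_sq_mul_sq_sum_le {Ω : Type*} [MeasurableSpace Ω] (μ : Measure Ω) {ι : Type*}
    (s : Finset ι) (Z : ι → Ω → ℝ) (i : ι) {σ : ℝ}
    (hZ : ∀ j, Integrable (fun ω => |Z j ω| ^ 3) μ) (hσ : ∀ ω, |∑ j ∈ s, Z j ω| ≤ σ) :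
    ∫ ω, Z i ω ^ 2 * (∑ j ∈ s, Z j ω) ^ 2 ∂μ
      ≤ σ * ∑ j ∈ s, (2 / 3 * ∫ ω, |Z i ω| ^ 3 ∂μ + 1 / 3 * ∫ ω, |Z j ω| ^ 3 ∂μ) := by
  have hterm : ∀ j, Integrable (fun ω => 2 / 3 * |Z i ω| ^ 3 + 1 / 3 * |Z j ω| ^ 3) μ :=
    fun j => ((hZ i).const_mul _).add ((hZ j).const_mul _)
  calc ∫ ω, Z i ω ^ 2 * (∑ j ∈ s, Z j ω) ^ 2 ∂μ
      ≤ ∫ ω, σ * ∑ j ∈ s, (2 / 3 * |Z i ω| ^ 3 + 1 / 3 * |Z j ω| ^ 3) ∂μ :=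
        integral_mono_of_nonneg (ae_of_all _ fun ω => by positivity)
          ((integrable_finsetSum _ fun j _ => hterm j).const_mul σ)
          (ae_of_all _ fun ω => sq_mul_sq_sum_le s (Z · ω) i (hσ ω))
    _ = σ * ∑ j ∈ s, (2 / 3 * ∫ ω, |Z i ω| ^ 3 ∂μ + 1 / 3 * ∫ ω, |Z j ω| ^ 3 ∂μ) := by
        rw [integral_const_mul, integral_finsetSum _ fun j _ => hterm j]
        congr 1
        refine sum_congr rfl fun j _ => ?_
        rw [integral_add ((hZ i).const_mul _) ((hZ j).const_mul _), integral_const_mul,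
          integral_const_mul]

theorem truncated_cross_moment_bound_general
    {Ω : Type*} [MeasureSpace Ω] [IsProbabilityMeasure (ℙ : Measure Ω)]
    {ι : Type*} [DecidableEq ι] (J : Finset ι) (X : ι → Ω → ℝ)
    (A : ι → Finset ι)
    (hmeas : ∀ i, Measurable (X i))
    (hAJ : ∀ i ∈ J, A i ⊆ J)
    (σ κ : ℝ) (hσ : 0 < σ) (hκ : 1 ≤ κ)
    (hκA : ∀ i ∈ J, ((A i).card : ℝ) ≤ κ)
    (hκA' : ∀ i ∈ J, ((J.filter fun j => i ∈ A j).card : ℝ) ≤ κ)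
    -- truncated variables
    (Xb : ι → Ω → ℝ) (hXb : ∀ i, Xb i = fun ω => if |X i ω| ≤ σ / κ then X i ω else 0)
    (Yb : ι → Ω → ℝ) (hYb : ∀ i, Yb i = fun ω => ∑ j ∈ A i, Xb j ω)
    (β₃ : ℝ)
    (hβ₃ : β₃ = σ⁻¹ ^ 3 * ∑ i ∈ J, ∫ ω, (if |X i ω| ≤ σ / κ then |X i ω| ^ 3 else 0)) :
    (∑ i ∈ J, ∫ ω, (Xb i ω) ^ 2 * (Yb i ω) ^ 2) ≤ κ * σ ^ 4 * β₃ := by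
  have hκ0 : 0 < κ := one_pos.trans_le hκ
  have hXb_le : ∀ i ω, |Xb i ω| ≤ σ / κ := fun i ω => by
    rw [hXb]; exact abs_ite_abs_le_le (by positivity)
  have hcube : ∀ i, (fun ω => |Xb i ω| ^ 3)
      = fun ω => if |X i ω| ≤ σ / κ then |X i ω| ^ 3 else 0 := fun i => by
    ext ω; rw [hXb]; exact abs_ite_abs_le_pow _ _ three_ne_zero
  have hXb_meas : ∀ i, Measurable (Xb i) := fun i => by
    rw [hXb]
    exact Measurable.ite (measurableSet_le (hmeas i).abs measurable_const) (hmeas i)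
      measurable_const
  have hcube_int : ∀ i, Integrable (fun ω => |Xb i ω| ^ 3) ℙ := fun i =>
    Integrable.of_bound ((hXb_meas i).abs.pow_const 3).aestronglyMeasurable ((σ / κ) ^ 3)
      (ae_of_all _ fun ω => by
        rw [Real.norm_eq_abs, abs_pow, abs_abs]
        exact pow_le_pow_left₀ (abs_nonneg _) (hXb_le i ω) 3)
  have hYb_le : ∀ i ∈ J, ∀ ω, |∑ j ∈ A i, Xb j ω| ≤ σ := fun i hi ω => calc
    |∑ j ∈ A i, Xb j ω| ≤ (A i).card • (σ / κ) :=
      (abs_sum_le_sum_abs _ _).trans (sum_le_card_nsmul _ _ _ fun j _ => hXb_le j ω)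
    _ ≤ κ * (σ / κ) := by rw [nsmul_eq_mul]; gcongr; exact hκA i hi
    _ = σ := by field_simp
  set G : ι → ℝ := fun i => ∫ ω, |Xb i ω| ^ 3
  calc ∑ i ∈ J, ∫ ω, Xb i ω ^ 2 * Yb i ω ^ 2
      ≤ ∑ i ∈ J, σ * ∑ j ∈ A i, (2 / 3 * G i + 1 / 3 * G j) := sum_le_sum fun i hi => by
        simpa only [hYb] using integral_sq_mul_sq_sum_le ℙ (A i) Xb i hcube_int (hYb_le i hi)
    _ ≤ σ * (κ * ∑ i ∈ J, G i) := by
        rw [← mul_sum]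
        gcongr
        exact sum_sum_two_thirds_add_third_le J A (fun i _ => integral_nonneg fun ω => by positivity)
          hAJ hκA hκA'
    _ = κ * σ ^ 4 * β₃ := by
        simp only [G, hcube, hβ₃]
        field_simp

/-- Under (LD1): `∑ᵢ E[X̄ᵢ²·Ȳᵢ²] ≤ κ·σ⁴·β₃`. -/
theorem truncated_cross_moment_bound
    {Ω : Type*} [MeasureSpace Ω] [IsProbabilityMeasure (ℙ : Measure Ω)]
    {ι : Type*} [DecidableEq ι] (J : Finset ι) (X : ι → Ω → ℝ)
    (A : ι → Finset ι)
    (hmeas : ∀ i, Measurable (X i))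
    (hL2 : ∀ i ∈ J, MemLp (X i) 2 ℙ)
    (hmean : ∀ i ∈ J, (∫ ω, X i ω) = 0)
    (hiA : ∀ i ∈ J, i ∈ A i) (hAJ : ∀ i ∈ J, A i ⊆ J) 
    -- (LD1): `X i` is independent of `{X j : j ∉ A i}`
    (hLD1 : ∀ i ∈ J, Indep (MeasurableSpace.comap (X i) inferInstance)
      (⨆ j ∈ J \ A i, MeasurableSpace.comap (X j) inferInstance) ℙ)
    (σ κ : ℝ) (hσ : 0 < σ) (hκ : 1 ≤ κ)
    (hσdef : σ ^ 2 = variance (fun ω => ∑ i ∈ J, X i ω) ℙ)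
    (hκA : ∀ i ∈ J, ((A i).card : ℝ) ≤ κ)
    (hκA' : ∀ i ∈ J, ((J.filter fun j => i ∈ A j).card : ℝ) ≤ κ)
    -- truncated variables
    (Xb : ι → Ω → ℝ) (hXb : ∀ i, Xb i = fun ω => if |X i ω| ≤ σ / κ then X i ω else 0)
    (Yb : ι → Ω → ℝ) (hYb : ∀ i, Yb i = fun ω => ∑ j ∈ A i, Xb j ω)
    (β₃ : ℝ)
    (hβ₃ : β₃ = σ⁻¹ ^ 3 * ∑ i ∈ J, ∫ ω, (if |X i ω| ≤ σ / κ then |X i ω| ^ 3 else 0)) :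
    (∑ i ∈ J, ∫ ω, (Xb i ω) ^ 2 * (Yb i ω) ^ 2) ≤ κ * σ ^ 4 * β₃ :=
  truncated_cross_moment_bound_general J X A hmeas hAJ σ κ hσ hκ hκA hκA' Xb hXb Yb hYb β₃ hβ₃
end

section
/- For the piecewise smoothing function f_{a,b,v} defined below (with α > 0, a ≤ b, v > 0), its derivative satisfies f'_{a,b,v}(w) = 1 for z + a/v ≤ w ≤ z + b/v, f'_{a,b,v}(w) = 0 for w < z + (a−α)/v or w > z + (b+α)/v, f'_{a,b,v} is Lipschitz, and ‖f_{a,b,v}‖_∞ ≤ (b − a + α)/(2v). -/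
open Filter Asymptotics

/-! `f w = R (w - p) - R (w - q) - (q - p) / 2` with `c = α / v`,
`p = z + (a - α) / v`, `q = z + b / v`, where `R t = ((t⁺)² - ((t - c)⁺)²) / (2c)` is a `C¹`
ramp. Since `(t⁺)²` is differentiable with derivative `2 t⁺`, no case analysis at the break
points is needed: `R'` is the clamp `min t⁺ c / c`, so `f'` is a difference of two Lipschitz
clamps, equal to `1` between `p + c` and `q` and to `0` outside `[p, q + c]`. As `f' ≥ 0`,
`f` is monotone between its constant values `∓(q - p) / 2` at the two ends. -/

theorem hasDerivAt_max_zero_sq (t : ℝ) :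
    HasDerivAt (fun x : ℝ => max x 0 ^ 2) (2 * max t 0) t := by
  rcases lt_trichotomy t 0 with ht | rfl | ht
  · rw [max_eq_right ht.le, mul_zero]
    refine (hasDerivAt_const t 0).congr_of_eventuallyEq ?_
    filter_upwards [eventually_lt_nhds ht] with x hx
    rw [max_eq_right hx.le]; ring
  · rw [max_self, mul_zero, hasDerivAt_iff_isLittleO_nhds_zero]
    refine (IsBigO.of_bound 1 ?_).trans_isLittleO (isLittleO_pow_id one_lt_two)
    filter_upwards with h
    simp only [zero_add, max_self, smul_zero, sub_zero, one_mul, Real.norm_eq_abs]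
    rcases le_total h 0 with hh | hh <;> simp [hh, sq_nonneg]
  · rw [max_eq_left ht.le]
    refine ((hasDerivAt_pow 2 t).congr_deriv (by ring)).congr_of_eventuallyEq ?_
    filter_upwards [eventually_gt_nhds ht] with x hx
    rw [max_eq_left hx.le]

noncomputable def smoothRamp (c t : ℝ) : ℝ := (max t 0 ^ 2 - max (t - c) 0 ^ 2) / (2 * c)

noncomputable def rampSlope (c t : ℝ) : ℝ := min (max t 0) c / c

noncomputable def smoothClip (c p q w : ℝ) : ℝ :=
  smoothRamp c (w - p) - smoothRamp c (w - q) - (q - p) / 2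

section
variable {c t : ℝ}

theorem max_sub_max_sub_eq_min (hc : 0 ≤ c) (t : ℝ) :
    max t 0 - max (t - c) 0 = min (max t 0) c := by
  rcases le_total t 0 with h0 | h0
  · rw [max_eq_right h0, max_eq_right (by linarith), min_eq_left hc, sub_zero]
  rcases le_total t c with h1 | h1
  · rw [max_eq_left h0, max_eq_right (by linarith), min_eq_left h1, sub_zero]
  · rw [max_eq_left h0, max_eq_left (by linarith), min_eq_right h1]; ring

theorem hasDerivAt_smoothRamp (hc : 0 ≤ c) (t : ℝ) :
    HasDerivAt (smoothRamp c) (rampSlope c t) t := by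
  have h := ((hasDerivAt_max_zero_sq t).sub
    ((hasDerivAt_max_zero_sq (t - c)).comp t ((hasDerivAt_id t).sub_const c))).div_const (2 * c)
  refine h.congr_deriv ?_
  rw [rampSlope, ← max_sub_max_sub_eq_min hc]
  simp only [mul_one]
  rcases eq_or_lt_of_le hc with rfl | hc
  · simp
  · field_simp

theorem smoothRamp_of_nonpos (hc : 0 ≤ c) (ht : t ≤ 0) : smoothRamp c t = 0 := by
  simp [smoothRamp, ht, (by linarith : t - c ≤ 0)]

theorem smoothRamp_of_le (hc : 0 < c) (ht : c ≤ t) : smoothRamp c t = t - c / 2 := by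
  rw [smoothRamp, max_eq_left (by linarith), max_eq_left (by linarith)]
  field_simp; ring

theorem smoothRamp_of_nonneg_of_le (ht : 0 ≤ t) (htc : t ≤ c) :
    smoothRamp c t = t ^ 2 / (2 * c) := by
  simp [smoothRamp, ht, (by linarith : t - c ≤ 0)]

theorem rampSlope_of_nonpos (hc : 0 ≤ c) (ht : t ≤ 0) : rampSlope c t = 0 := by
  simp [rampSlope, ht, hc]

theorem rampSlope_of_le (hc : 0 < c) (ht : c ≤ t) : rampSlope c t = 1 := by
  rw [rampSlope, max_eq_left (by linarith), min_eq_right ht, div_self hc.ne']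

theorem monotone_rampSlope (hc : 0 ≤ c) : Monotone (rampSlope c) := fun s t hst => by
  unfold rampSlope; gcongr

theorem lipschitzWith_rampSlope (c : ℝ) : LipschitzWith ‖c⁻¹‖₊ (rampSlope c) := by
  rw [show rampSlope c = fun t => c⁻¹ • min (max t 0) c from
    funext fun t => by simp [rampSlope, div_eq_inv_mul], ← mul_one ‖c⁻¹‖₊]
  exact (lipschitzWith_smul c⁻¹).comp ((LipschitzWith.id.max_const 0).min_const c)

end

section
variable {c p q w : ℝ}

theorem hasDerivAt_smoothClip (hc : 0 ≤ c) (w : ℝ) :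
    HasDerivAt (smoothClip c p q) (rampSlope c (w - p) - rampSlope c (w - q)) w :=
  (((hasDerivAt_smoothRamp hc _).comp_sub_const w p).sub
    ((hasDerivAt_smoothRamp hc _).comp_sub_const w q)).sub_const _

theorem deriv_smoothClip (hc : 0 ≤ c) :
    deriv (smoothClip c p q) = fun w => rampSlope c (w - p) - rampSlope c (w - q) :=
  funext fun w => (hasDerivAt_smoothClip hc w).deriv

theorem deriv_smoothClip_of_mem_Icc (hc : 0 < c) (hpw : p + c ≤ w) (hwq : w ≤ q) :
    deriv (smoothClip c p q) w = 1 := by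
  rw [(hasDerivAt_smoothClip hc.le w).deriv, rampSlope_of_le hc (by linarith),
    rampSlope_of_nonpos hc.le (by linarith), sub_zero]

theorem deriv_smoothClip_of_le (hc : 0 ≤ c) (hpq : p ≤ q) (hw : w ≤ p) :
    deriv (smoothClip c p q) w = 0 := by
  rw [(hasDerivAt_smoothClip hc w).deriv, rampSlope_of_nonpos hc (by linarith),
    rampSlope_of_nonpos hc (by linarith), sub_zero]

theorem deriv_smoothClip_of_ge (hc : 0 < c) (hpq : p ≤ q) (hw : q + c ≤ w) :
    deriv (smoothClip c p q) w = 0 := by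
  rw [(hasDerivAt_smoothClip hc.le w).deriv, rampSlope_of_le hc (by linarith),
    rampSlope_of_le hc (by linarith), sub_self]

theorem lipschitzWith_deriv_smoothClip (hc : 0 ≤ c) :
    LipschitzWith (‖c⁻¹‖₊ + ‖c⁻¹‖₊) (deriv (smoothClip c p q)) := by
  have h (r : ℝ) : LipschitzWith ‖c⁻¹‖₊ fun w => rampSlope c (w - r) := by
    have := (lipschitzWith_rampSlope c).comp (IsometryEquiv.subRight r).isometry.lipschitz
    rwa [mul_one] at this
  rw [deriv_smoothClip hc]
  exact (h p).sub (h q)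

theorem monotone_smoothClip (hc : 0 ≤ c) (hpq : p ≤ q) : Monotone (smoothClip c p q) :=
  monotone_of_deriv_nonneg (fun w => (hasDerivAt_smoothClip hc w).differentiableAt) fun w => by
    rw [deriv_smoothClip hc, sub_nonneg]
    exact monotone_rampSlope hc (by linarith)

theorem smoothClip_of_le (hc : 0 ≤ c) (hpq : p ≤ q) (hw : w ≤ p) :
    smoothClip c p q w = -((q - p) / 2) := by
  rw [smoothClip, smoothRamp_of_nonpos hc (by linarith), smoothRamp_of_nonpos hc (by linarith)]
  ring

theorem smoothClip_of_ge (hc : 0 < c) (hpq : p ≤ q) (hw : q + c ≤ w) :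
    smoothClip c p q w = (q - p) / 2 := by
  rw [smoothClip, smoothRamp_of_le hc (by linarith), smoothRamp_of_le hc (by linarith)]
  ring

theorem abs_smoothClip_le (hc : 0 < c) (hpq : p ≤ q) (w : ℝ) :
    |smoothClip c p q w| ≤ (q - p) / 2 := by
  have hmono := monotone_smoothClip hc.le hpq
  rw [abs_le]
  constructor
  · calc -((q - p) / 2) = smoothClip c p q (min w p) :=
          (smoothClip_of_le hc.le hpq (min_le_right w p)).symm
      _ ≤ smoothClip c p q w := hmono (min_le_left w p)
  · calc smoothClip c p q w ≤ smoothClip c p q (max w (q + c)) := hmono (le_max_left _ _)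
      _ = (q - p) / 2 := smoothClip_of_ge hc hpq (le_max_right _ _)

end

theorem piecewise_eq_smoothClip (z α a b v : ℝ) (hα : 0 < α) (hab : a ≤ b) (hv : 0 < v) :
    (fun w =>
      if w ≤ z + (a - α) / v then -(b - a + α) / (2 * v)
      else if w ≤ z + a / v then
        v / (2 * α) * (w - z - (a - α) / v) ^ 2 - (b - a + α) / (2 * v)
      else if w ≤ z + b / v then w - z - (a + b) / (2 * v)
      else if w ≤ z + (b + α) / v then
        -(v / (2 * α)) * (w - z - (b + α) / v) ^ 2 + (b - a + α) / (2 * v)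
      else (b - a + α) / (2 * v)) = smoothClip (α / v) (z + (a - α) / v) (z + b / v) := by
  have hc : 0 < α / v := div_pos hα hv
  have hp : z + a / v = z + (a - α) / v + α / v := by ring
  have hq : z + (b + α) / v = z + b / v + α / v := by ring
  have hpq : z + a / v ≤ z + b / v := by gcongr
  funext w
  simp only [smoothClip]
  split_ifs
  · rw [smoothRamp_of_nonpos hc.le (by linarith), smoothRamp_of_nonpos hc.le (by linarith)]
    field_simp; ring
  · rw [smoothRamp_of_nonneg_of_le (by linarith) (by linarith),
      smoothRamp_of_nonpos hc.le (by linarith)]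
    field_simp; ring
  · rw [smoothRamp_of_le hc (by linarith), smoothRamp_of_nonpos hc.le (by linarith)]
    field_simp; ring
  · rw [smoothRamp_of_le hc (by linarith), smoothRamp_of_nonneg_of_le (by linarith) (by linarith)]
    field_simp; ring
  · rw [smoothRamp_of_le hc (by linarith), smoothRamp_of_le hc (by linarith)]
    field_simp; ring

/-- Properties of the piecewise smoothing function `f_{a,b,v}` used in the
concentration inequality argument. -/
theorem smoothing_function_properties
    (z α a b v : ℝ) (hα : 0 < α) (hab : a ≤ b) (hv : 0 < v)
    (f : ℝ → ℝ)
    (hf : f = fun w =>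
      if w ≤ z + (a - α) / v then -(b - a + α) / (2 * v)
      else if w ≤ z + a / v then
        v / (2 * α) * (w - z - (a - α) / v) ^ 2 - (b - a + α) / (2 * v)
      else if w ≤ z + b / v then w - z - (a + b) / (2 * v)
      else if w ≤ z + (b + α) / v then
        -(v / (2 * α)) * (w - z - (b + α) / v) ^ 2 + (b - a + α) / (2 * v)
      else (b - a + α) / (2 * v)) :
    (∀ w : ℝ, z + a / v ≤ w → w ≤ z + b / v → deriv f w = 1) ∧
    (∀ w : ℝ, w < z + (a - α) / v ∨ z + (b + α) / v < w → deriv f w = 0) ∧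
    (∃ L : NNReal, LipschitzWith L (deriv f)) ∧
    (∀ w : ℝ, |f w| ≤ (b - a + α) / (2 * v)) := by
  rw [hf, piecewise_eq_smoothClip z α a b v hα hab hv]
  have hc : 0 < α / v := div_pos hα hv
  have hp : z + a / v = z + (a - α) / v + α / v := by ring
  have hq : z + (b + α) / v = z + b / v + α / v := by ring
  have hpq : z + (a - α) / v ≤ z + b / v := by linarith [div_le_div_of_nonneg_right hab hv.le]
  refine ⟨fun w h₁ h₂ => deriv_smoothClip_of_mem_Icc hc (hp ▸ h₁) h₂, ?_,
    ⟨_, lipschitzWith_deriv_smoothClip hc.le⟩, fun w => ?_⟩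
  · rintro w (hw | hw)
    · exact deriv_smoothClip_of_le hc.le hpq hw.le
    · exact deriv_smoothClip_of_ge hc hpq (hq ▸ hw.le)
  · calc |_| ≤ (z + b / v - (z + (a - α) / v)) / 2 := abs_smoothClip_le hc hpq w
      _ = (b - a + α) / (2 * v) := by field_simp; ring
end
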